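/- arXiv:2312.05499 — 12 statements merged into one kernel-verified Lean document; each statement's English description precedes it below -/
import Mathlib

section
/- If an agent with maximum speed v_max can feasibly travel from the point π_i(t*_i) (departing at time t*_i) to the point π_j(t*_j) (arriving at time t*_j), where π_i, π_j are trajectories of targets moving at constant speeds v_i, v_j < v_max, and t*_i ∈ [ℓ_i, u_i], t*_j ∈ [ℓ_j, u_j], then the agent can feasibly travel from π_i(ℓ_i) to π_j(u_j): there is a path of length at most v_max·(u_j − ℓ_i) from π_i(ℓ_i) to π_j(u_j). Consequently, travel between two trajectory-intervals is feasible if and only if travel from the earliest point of the first interval to the latest point of the second interval is feasible. -/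
open Set

private lemma key
    (πi πj : ℝ → EuclideanSpace ℝ (Fin 2)) (vi vj vmax : ℝ)
    (hvi : vi < vmax) (hvj : vj < vmax)
    (hπi : ∀ s t : ℝ, ‖πi s - πi t‖ ≤ vi * |s - t|)
    (hπj : ∀ s t : ℝ, ‖πj s - πj t‖ ≤ vj * |s - t|)
    (ℓi ui ℓj uj ti tj : ℝ)
    (hti : ti ∈ Set.Icc ℓi ui) (htj : tj ∈ Set.Icc ℓj uj)
    (hfeas : ti ≤ tj ∧ ‖πj tj - πi ti‖ ≤ vmax * (tj - ti)) :
    ℓi ≤ uj ∧ ‖πj uj - πi ℓi‖ ≤ vmax * (uj - ℓi) := by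
  obtain ⟨h1, h2⟩ := hti
  obtain ⟨h3, h4⟩ := htj
  obtain ⟨h5, h6⟩ := hfeas
  have hle : ℓi ≤ uj := le_trans h1 (le_trans h5 h4)
  refine ⟨hle, ?_⟩
  have e : πj uj - πi ℓi = (πj uj - πj tj) + (πj tj - πi ti) + (πi ti - πi ℓi) := by
    abel
  have hv0 : (0:ℝ) ≤ vi := by
    have := hπi 1 0
    simp at this
    linarith [norm_nonneg (πi 1 - πi 0)]
  have hw0 : (0:ℝ) ≤ vj := by
    have := hπj 1 0
    simp at this
    linarith [norm_nonneg (πj 1 - πj 0)]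
  calc ‖πj uj - πi ℓi‖
      ≤ ‖πj uj - πj tj‖ + ‖πj tj - πi ti‖ + ‖πi ti - πi ℓi‖ := by
        rw [e]; exact le_trans (norm_add_le _ _)
          (by gcongr; exact norm_add_le _ _)
    _ ≤ vj * |uj - tj| + (vmax * (tj - ti)) + vi * |ti - ℓi| := by
        gcongr <;> [exact hπj _ _; exact hπi _ _]
    _ = vj * (uj - tj) + vmax * (tj - ti) + vi * (ti - ℓi) := by
        rw [abs_of_nonneg (by linarith), abs_of_nonneg (by linarith)]
    _ ≤ vmax * (uj - tj) + vmax * (tj - ti) + vmax * (ti - ℓi) := by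
        gcongr <;> nlinarith
    _ = vmax * (uj - ℓi) := by ring

theorem stmt0
    (πi πj : ℝ → EuclideanSpace ℝ (Fin 2)) (vi vj vmax : ℝ)
    (hvi : vi < vmax) (hvj : vj < vmax)
    (hπi : ∀ s t : ℝ, ‖πi s - πi t‖ ≤ vi * |s - t|)
    (hπj : ∀ s t : ℝ, ‖πj s - πj t‖ ≤ vj * |s - t|)
    (ℓi ui ℓj uj ti tj : ℝ)
    (hti : ti ∈ Set.Icc ℓi ui) (htj : tj ∈ Set.Icc ℓj uj)
    (hfeas : ti ≤ tj ∧ ‖πj tj - πi ti‖ ≤ vmax * (tj - ti)) :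
    (ℓi ≤ uj ∧ ‖πj uj - πi ℓi‖ ≤ vmax * (uj - ℓi)) ∧
    ((∃ t ∈ Set.Icc ℓi ui, ∃ t' ∈ Set.Icc ℓj uj,
        t ≤ t' ∧ ‖πj t' - πi t‖ ≤ vmax * (t' - t)) ↔
      (ℓi ≤ uj ∧ ‖πj uj - πi ℓi‖ ≤ vmax * (uj - ℓi))) := by
  have main := key πi πj vi vj vmax hvi hvj hπi hπj ℓi ui ℓj uj ti tj hti htj hfeas
  refine ⟨main, ?_, fun h => ⟨ℓi, ⟨le_refl _, le_trans hti.1 hti.2⟩,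
    uj, ⟨le_trans htj.1 htj.2, le_refl _⟩, h.1, h.2⟩⟩
  rintro ⟨t, ht, t', ht', hf⟩
  exact key πi πj vi vj vmax hvi hvj hπi hπj ℓi ui ℓj uj t t' ht ht' hf
end

section
/- Define the Earliest Feasible Arrival Time from π_i(t_i) to trajectory π_j as 𝓔(t_i) = inf{t ≥ t_i : ‖π_j(t) − π_i(t_i)‖ ≤ v_max·(t − t_i)}. If π_j is Lipschitz with constant v_j < v_max, then for any t_i the set {t ≥ t_i : ‖π_j(t) − π_i(t_i)‖ ≤ v_max·(t − t_i)} is a closed unbounded-above interval of the form [𝓔(t_i), ∞); in particular, if travel to π_j(t_r) is feasible from π_i(t_p), then travel to π_j(t) is feasible from π_i(t_p) for every t > t_r. -/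
open Set

theorem stmt4
    (πi πj : ℝ → EuclideanSpace ℝ (Fin 2)) (vj vmax : ℝ)
    (hvj0 : 0 ≤ vj) (hvj : vj < vmax)
    (hπj : ∀ s t : ℝ, ‖πj s - πj t‖ ≤ vj * |s - t|) (ti : ℝ) :
    ({t : ℝ | ti ≤ t ∧ ‖πj t - πi ti‖ ≤ vmax * (t - ti)} =
      Set.Ici (sInf {t : ℝ | ti ≤ t ∧ ‖πj t - πi ti‖ ≤ vmax * (t - ti)})) ∧
    (∀ tr t : ℝ, (ti ≤ tr ∧ ‖πj tr - πi ti‖ ≤ vmax * (tr - ti)) → tr < t →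
      ti ≤ t ∧ ‖πj t - πi ti‖ ≤ vmax * (t - ti)) := by
  set S := {t : ℝ | ti ≤ t ∧ ‖πj t - πi ti‖ ≤ vmax * (t - ti)} with hS
  have hmono : ∀ tr t : ℝ, (ti ≤ tr ∧ ‖πj tr - πi ti‖ ≤ vmax * (tr - ti)) → tr ≤ t →
      ti ≤ t ∧ ‖πj t - πi ti‖ ≤ vmax * (t - ti) := by
    intro tr t ⟨h1, h2⟩ hlt
    refine ⟨le_trans h1 hlt, ?_⟩
    have key : ‖πj t - πi ti‖ ≤ ‖πj t - πj tr‖ + ‖πj tr - πi ti‖ := by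
      have := norm_sub_le_norm_sub_add_norm_sub (πj t) (πj tr) (πi ti)
      linarith [this]
    have h3 : ‖πj t - πj tr‖ ≤ vj * (t - tr) := by
      have := hπj t tr
      rwa [abs_of_nonneg (by linarith)] at this
    have : vj * (t - tr) ≤ vmax * (t - tr) :=
      mul_le_mul_of_nonneg_right (le_of_lt hvj) (by linarith)
    nlinarith
  have hbdd : BddBelow S := ⟨ti, fun t ht => ht.1⟩
  have hne : S.Nonempty := by
    refine ⟨ti + ‖πj ti - πi ti‖ / (vmax - vj), ?_, ?_⟩
    · have : 0 ≤ ‖πj ti - πi ti‖ / (vmax - vj) :=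
        div_nonneg (norm_nonneg _) (by linarith)
      linarith
    · set d := ‖πj ti - πi ti‖ / (vmax - vj) with hd
      have hd0 : 0 ≤ d := div_nonneg (norm_nonneg _) (by linarith)
      have key : ‖πj (ti + d) - πi ti‖ ≤ ‖πj (ti + d) - πj ti‖ + ‖πj ti - πi ti‖ := by
        have := norm_sub_le_norm_sub_add_norm_sub (πj (ti + d)) (πj ti) (πi ti)
        linarith
      have h3 : ‖πj (ti + d) - πj ti‖ ≤ vj * d := by
        have := hπj (ti + d) ti
        simp only [add_sub_cancel_left] at this
        rwa [abs_of_nonneg hd0] at this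
      have hnorm : ‖πj ti - πi ti‖ = (vmax - vj) * d := by
        rw [hd, mul_div_cancel₀ _ (by linarith : vmax - vj ≠ 0)]
      have : ti + d - ti = d := by ring
      rw [this]
      nlinarith
  have hcont : Continuous πj := by
    have : LipschitzWith ⟨vj, hvj0⟩ πj :=
      LipschitzWith.of_dist_le_mul (fun x y => by
        rw [dist_eq_norm]; exact hπj x y)
    exact this.continuous
  have hclosed : IsClosed S := by
    have : S = Ici ti ∩ {t : ℝ | ‖πj t - πi ti‖ - vmax * (t - ti) ≤ 0} := by
      ext t; simp [hS, Set.mem_setOf_eq, sub_nonpos]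
    rw [this]
    exact isClosed_Ici.inter (isClosed_le (by fun_prop) continuous_const)
  have hinf_mem : sInf S ∈ S := hclosed.csInf_mem hne hbdd
  constructor
  · ext t
    constructor
    · intro ht
      exact csInf_le hbdd ht
    · intro ht
      exact hmono (sInf S) t hinf_mem ht
  · intro tr t h hlt
    exact hmono tr t h (le_of_lt hlt)
end

section
/- Monotonicity of the Earliest Feasible Arrival Time: if π_i and π_j are Lipschitz trajectories with constants v_i < v_max and v_j < v_max, and t₁ < t₂ are two departure times from π_i for which the EFAT to π_j exists, then 𝓔(t₁) < 𝓔(t₂), where 𝓔(t) = min{t' ≥ t : ‖π_j(t') − π_i(t)‖ ≤ v_max·(t' − t)}, provided π_i(t₂) ≠ π_j(t₂). -/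
open Set

theorem stmt5
    (πi πj : ℝ → EuclideanSpace ℝ (Fin 2)) (vi vj vmax : ℝ)
    (hvi : vi < vmax) (hvj : vj < vmax)
    (hπi : ∀ s t : ℝ, ‖πi s - πi t‖ ≤ vi * |s - t|)
    (hπj : ∀ s t : ℝ, ‖πj s - πj t‖ ≤ vj * |s - t|)
    (t1 t2 E1 E2 : ℝ) (h12 : t1 < t2)
    (hne : πi t2 ≠ πj t2)
    (hE1 : IsLeast {t' : ℝ | t1 ≤ t' ∧ ‖πj t' - πi t1‖ ≤ vmax * (t' - t1)} E1)
    (hE2 : IsLeast {t' : ℝ | t2 ≤ t' ∧ ‖πj t' - πi t2‖ ≤ vmax * (t' - t2)} E2) :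
    E1 < E2 := by
  obtain ⟨⟨ht2E2, hfeas2⟩, hmin2⟩ := hE2
  obtain ⟨⟨ht1E1, hfeas1⟩, hmin1⟩ := hE1
  have hvi0 : 0 ≤ vi := le_trans (norm_nonneg _) (by simpa using hπi 1 0)
  have hvj0 : 0 ≤ vj := le_trans (norm_nonneg _) (by simpa using hπj 1 0)
  have hvmax : 0 < vmax := lt_of_le_of_lt hvi0 hvi
  have htri : ‖πj E2 - πi t1‖ ≤ ‖πj E2 - πi t2‖ + ‖πi t2 - πi t1‖ :=
    norm_sub_le_norm_sub_add_norm_sub _ _ _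
  have hi21 : ‖πi t2 - πi t1‖ ≤ vi * (t2 - t1) := by
    have := hπi t2 t1
    rwa [abs_of_pos (by linarith : (0:ℝ) < t2 - t1)] at this
  have key : ‖πj E2 - πi t1‖ < vmax * (E2 - t1) := by nlinarith
  have hE1le : E1 ≤ E2 := hmin1 ⟨by linarith, key.le⟩
  by_contra h
  push_neg at h
  have hEq : E1 = E2 := le_antisymm hE1le h
  subst hEq
  have hgap : 0 < vmax * (E1 - t1) - ‖πj E1 - πi t1‖ := by linarith
  set g := vmax * (E1 - t1) - ‖πj E1 - πi t1‖ with hg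
  have hE1gt : t1 < E1 := by linarith
  set ε := min (g / (vj + vmax)) (E1 - t1) with hε
  have hεpos : 0 < ε := lt_min (div_pos hgap (by linarith)) (by linarith)
  have hε1 : ε ≤ g / (vj + vmax) := min_le_left _ _
  have hε2 : ε ≤ E1 - t1 := min_le_right _ _
  have hεg : (vj + vmax) * ε ≤ g := by
    rw [mul_comm]
    exact (le_div_iff₀ (by linarith : (0:ℝ) < vj + vmax)).mp hε1
  have hj : ‖πj (E1 - ε) - πj E1‖ ≤ vj * ε := by
    have := hπj (E1 - ε) E1
    rwa [show E1 - ε - E1 = -ε by ring, abs_neg, abs_of_pos hεpos] at this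
  have htri2 : ‖πj (E1 - ε) - πi t1‖ ≤ ‖πj (E1 - ε) - πj E1‖ + ‖πj E1 - πi t1‖ :=
    norm_sub_le_norm_sub_add_norm_sub _ _ _
  have hmem : E1 - ε ∈ {t' : ℝ | t1 ≤ t' ∧ ‖πj t' - πi t1‖ ≤ vmax * (t' - t1)} := by
    refine ⟨by linarith, ?_⟩
    nlinarith
  have := hmin1 hmem
  linarith
end

section
/- If π_i(t) ≠ π_j(t) (trajectories do not intersect at the departure time t) and 𝓔(t) is the earliest feasible arrival time from π_i(t) to π_j, then the feasibility inequality is tight at the optimum: ‖π_j(𝓔(t)) − π_i(t)‖ = v_max·(𝓔(t) − t); i.e., the agent must travel at its maximum speed along a straight line to achieve the earliest arrival. -/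
open Set

theorem stmt6
    (πi πj : ℝ → EuclideanSpace ℝ (Fin 2)) (vj vmax : ℝ)
    (hvj0 : 0 ≤ vj) (hvj : vj < vmax)
    (hπj : ∀ s t : ℝ, ‖πj s - πj t‖ ≤ vj * |s - t|)
    (t E : ℝ) (hne : πi t ≠ πj t)
    (hE : IsLeast {t' : ℝ | t ≤ t' ∧ ‖πj t' - πi t‖ ≤ vmax * (t' - t)} E) :
    ‖πj E - πi t‖ = vmax * (E - t) := by
  obtain ⟨⟨htE, hfeas⟩, hlb⟩ := hE
  refine le_antisymm hfeas ?_
  by_contra hlt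
  push_neg at hlt
  have hvmax : 0 < vmax := lt_of_le_of_lt hvj0 hvj
  have hnorm : 0 ≤ ‖πj E - πi t‖ := norm_nonneg _
  have hEt : t < E := by
    rcases eq_or_lt_of_le htE with h | h
    · exfalso
      apply hne
      have : ‖πj t - πi t‖ ≤ 0 := by
        have := hfeas; rw [← h] at this; simpa using this
      have : πj t - πi t = 0 := by
        simpa using le_antisymm this (norm_nonneg _)
      have := sub_eq_zero.mp this
      exact this.symm
    · exact h
  set δ := vmax * (E - t) - ‖πj E - πi t‖ with hδdef
  have hδ : 0 < δ := by rw [hδdef]; linarith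
  have hden : 0 < vj + vmax + 1 := by linarith
  set ε := min (δ / (vj + vmax + 1)) (E - t) with hεdef
  have hε : 0 < ε := lt_min (by positivity) (by linarith)
  have hε1 : ε ≤ δ / (vj + vmax + 1) := min_le_left _ _
  have hε2 : ε ≤ E - t := min_le_right _ _
  set s := E - ε with hsdef
  have hts : t ≤ s := by simp [hsdef]; linarith
  have hkey : (vj + vmax) * ε ≤ δ := by
    have : (vj + vmax) * ε ≤ (vj + vmax) * (δ / (vj + vmax + 1)) :=
      mul_le_mul_of_nonneg_left hε1 (by linarith)
    have h2 : (vj + vmax) * (δ / (vj + vmax + 1)) ≤ δ := by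
      rw [← mul_div_assoc, div_le_iff₀ hden]
      nlinarith
    linarith
  have hfs : ‖πj s - πi t‖ ≤ vmax * (s - t) := by
    have h1 : ‖πj s - πi t‖ ≤ ‖πj s - πj E‖ + ‖πj E - πi t‖ := by
      have := norm_sub_le_norm_sub_add_norm_sub (πj s) (πj E) (πi t)
      linarith [this]
    have h2 : ‖πj s - πj E‖ ≤ vj * ε := by
      have := hπj s E
      have habs : |s - E| = ε := by
        rw [hsdef]; rw [abs_of_nonpos (by linarith)]; ring
      rw [habs] at this; exact this
    have : vmax * (s - t) = vmax * (E - t) - vmax * ε := by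
      rw [hsdef]; ring
    rw [this]
    have : vj * ε + ‖πj E - πi t‖ ≤ vmax * (E - t) - vmax * ε := by
      have : vj * ε + vmax * ε ≤ δ := by linarith [hkey]
      rw [hδdef] at this; linarith
    linarith
  have := hlb ⟨hts, hfs⟩
  simp [hsdef] at this
  linarith
end

section
/- Fixed-point duality of EFAT and LFDT: for Lipschitz trajectories π_i, π_j with constants v_i, v_j < v_max, define 𝓔(t) = min{t' ≥ t : ‖π_j(t') − π_i(t)‖ ≤ v_max·(t' − t)} and 𝓛(t') = max{t ≤ t' : ‖π_j(t') − π_i(t)‖ ≤ v_max·(t' − t)}. Then for every t for which 𝓔(t) is defined, 𝓛(𝓔(t)) = t, and symmetrically 𝓔(𝓛(t')) = t' for every t' for which 𝓛(t') is defined, provided π_i(t) ≠ π_j(t) (resp. π_i(t') ≠ π_j(t')). -/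
open Set

theorem stmt7
    (πi πj : ℝ → EuclideanSpace ℝ (Fin 2)) (vi vj vmax : ℝ)
    (hvi : vi < vmax) (hvj : vj < vmax)
    (hπi : ∀ s t : ℝ, ‖πi s - πi t‖ ≤ vi * |s - t|)
    (hπj : ∀ s t : ℝ, ‖πj s - πj t‖ ≤ vj * |s - t|) :
    (∀ t E L : ℝ, πi t ≠ πj t →
      IsLeast {t' : ℝ | t ≤ t' ∧ ‖πj t' - πi t‖ ≤ vmax * (t' - t)} E →
      IsGreatest {s : ℝ | s ≤ E ∧ ‖πj E - πi s‖ ≤ vmax * (E - s)} L →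
      L = t) ∧
    (∀ t' L E : ℝ, πi t' ≠ πj t' →
      IsGreatest {s : ℝ | s ≤ t' ∧ ‖πj t' - πi s‖ ≤ vmax * (t' - s)} L →
      IsLeast {u : ℝ | L ≤ u ∧ ‖πj u - πi L‖ ≤ vmax * (u - L)} E →
      E = t') := by
  have hi0 : 0 ≤ vi := by
    have h := hπi 1 0
    have hn := norm_nonneg (πi 1 - πi 0)
    have : |(1:ℝ) - 0| = 1 := by norm_num
    rw [this] at h
    linarith
  have hj0 : 0 ≤ vj := by
    have h := hπj 1 0
    have hn := norm_nonneg (πj 1 - πj 0)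
    have : |(1:ℝ) - 0| = 1 := by norm_num
    rw [this] at h
    linarith
  have hvmax : 0 < vmax := lt_of_le_of_lt hi0 hvi
  constructor
  · intro t E L hne hE hL
    obtain ⟨⟨htE, hfE⟩, hmin⟩ := hE
    obtain ⟨⟨hLE, hfL⟩, hmax⟩ := hL
    have htL : t ≤ L := hmax ⟨htE, hfE⟩
    by_contra hLt
    have hLt' : t < L := lt_of_le_of_ne htL (Ne.symm hLt)
    have htEs : t < E := by
      rcases lt_or_eq_of_le htE with h | h
      · exact h
      · exfalso
        rw [← h] at hfE
        have : vmax * (t - t) = 0 := by ring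
        rw [this] at hfE
        have : πj t - πi t = 0 := norm_le_zero_iff.mp hfE
        exact hne (by rw [eq_comm, ← sub_eq_zero]; exact this)
    have hδ : 0 < (vmax - vi) * (L - t) := by
      apply mul_pos <;> linarith
    set δ := (vmax - vi) * (L - t) with hδdef
    -- key bound : ‖πj E - πi t‖ ≤ vmax*(E-t) - δ
    have hiLt : ‖πi L - πi t‖ ≤ vi * (L - t) := by
      have h := hπi L t
      rwa [abs_of_nonneg (by linarith : (0:ℝ) ≤ L - t)] at h
    have htri : ‖πj E - πi t‖ ≤ ‖πj E - πi L‖ + ‖πi L - πi t‖ := by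
      have := norm_add_le (πj E - πi L) (πi L - πi t)
      rwa [sub_add_sub_cancel] at this
    have hkey : ‖πj E - πi t‖ ≤ vmax * (E - t) - δ := by
      rw [hδdef]; nlinarith
    have hpos : (0:ℝ) < vj + vmax + 1 := by linarith
    set ε := min (δ / (vj + vmax + 1)) (E - t) with hεdef
    have hε0 : 0 < ε := lt_min (div_pos hδ hpos) (by linarith)
    have hε1 : ε * (vj + vmax + 1) ≤ δ := by
      have h1 : ε ≤ δ / (vj + vmax + 1) := min_le_left _ _
      exact (le_div_iff₀ hpos).mp h1
    have hε2 : ε ≤ E - t := min_le_right _ _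
    have hmem : (E - ε) ∈ {t' : ℝ | t ≤ t' ∧ ‖πj t' - πi t‖ ≤ vmax * (t' - t)} := by
      constructor
      · linarith
      · have hjE : ‖πj (E - ε) - πj E‖ ≤ vj * ε := by
          have h := hπj (E - ε) E
          rwa [show E - ε - E = -ε by ring, abs_neg,
            abs_of_nonneg (le_of_lt hε0)] at h
        have htri2 : ‖πj (E - ε) - πi t‖ ≤ ‖πj (E - ε) - πj E‖ + ‖πj E - πi t‖ := by
          have := norm_add_le (πj (E - ε) - πj E) (πj E - πi t)
          rwa [sub_add_sub_cancel] at this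
        nlinarith
    have := hmin hmem
    linarith
  · intro t' L E hne hL hE
    obtain ⟨⟨hLt, hfL⟩, hmax⟩ := hL
    obtain ⟨⟨hLE, hfE⟩, hmin⟩ := hE
    have hEt : E ≤ t' := hmin ⟨hLt, hfL⟩
    by_contra hne2
    have hEt' : E < t' := lt_of_le_of_ne hEt hne2
    have hLts : L < t' := by
      rcases lt_or_eq_of_le hLt with h | h
      · exact h
      · exfalso
        rw [h] at hfL
        have : vmax * (t' - t') = 0 := by ring
        rw [this] at hfL
        have : πj t' - πi t' = 0 := norm_le_zero_iff.mp hfL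
        exact hne (by rw [eq_comm, ← sub_eq_zero]; exact this)
    have hδ : 0 < (vmax - vj) * (t' - E) := by
      apply mul_pos <;> linarith
    set δ := (vmax - vj) * (t' - E) with hδdef
    have hjEt : ‖πj t' - πj E‖ ≤ vj * (t' - E) := by
      have h := hπj t' E
      rwa [abs_of_nonneg (by linarith : (0:ℝ) ≤ t' - E)] at h
    have htri : ‖πj t' - πi L‖ ≤ ‖πj t' - πj E‖ + ‖πj E - πi L‖ := by
      have := norm_add_le (πj t' - πj E) (πj E - πi L)
      rwa [sub_add_sub_cancel] at this
    have hkey : ‖πj t' - πi L‖ ≤ vmax * (t' - L) - δ := by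
      rw [hδdef]; nlinarith
    have hpos : (0:ℝ) < vi + vmax + 1 := by linarith
    set ε := min (δ / (vi + vmax + 1)) (t' - L) with hεdef
    have hε0 : 0 < ε := lt_min (div_pos hδ hpos) (by linarith)
    have hε1 : ε * (vi + vmax + 1) ≤ δ := by
      have h1 : ε ≤ δ / (vi + vmax + 1) := min_le_left _ _
      exact (le_div_iff₀ hpos).mp h1
    have hε2 : ε ≤ t' - L := min_le_right _ _
    have hmem : (L + ε) ∈ {s : ℝ | s ≤ t' ∧ ‖πj t' - πi s‖ ≤ vmax * (t' - s)} := by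
      constructor
      · linarith
      · have hiL : ‖πi L - πi (L + ε)‖ ≤ vi * ε := by
          have h := hπi L (L + ε)
          rwa [show L - (L + ε) = -ε by ring, abs_neg,
            abs_of_nonneg (le_of_lt hε0)] at h
        have htri2 : ‖πj t' - πi (L + ε)‖ ≤ ‖πj t' - πi L‖ + ‖πi L - πi (L + ε)‖ := by
          have := norm_add_le (πj t' - πi L) (πi L - πi (L + ε))
          rwa [sub_add_sub_cancel] at this
        nlinarith
    have := hmax hmem
    linarith
end

section
/- Strict monotonicity of the Latest Feasible Departure Time: for Lipschitz trajectories π_i, π_j with constants v_i, v_j < v_max, if t_r < t_s are two arrival times on π_j for which the LFDT from π_i exists and π_i does not intersect π_j at these times, then 𝓛(t_r) < 𝓛(t_s), where 𝓛(t') = max{t ≤ t' : ‖π_j(t') − π_i(t)‖ ≤ v_max·(t' − t)}. -/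
open Set

theorem stmt8
    (πi πj : ℝ → EuclideanSpace ℝ (Fin 2)) (vi vj vmax : ℝ)
    (hvi : vi < vmax) (hvj : vj < vmax)
    (hπi : ∀ s t : ℝ, ‖πi s - πi t‖ ≤ vi * |s - t|)
    (hπj : ∀ s t : ℝ, ‖πj s - πj t‖ ≤ vj * |s - t|)
    (tr ts Lr Ls : ℝ) (hrs : tr < ts)
    (hner : πi tr ≠ πj tr) (hnes : πi ts ≠ πj ts)
    (hLr : IsGreatest {s : ℝ | s ≤ tr ∧ ‖πj tr - πi s‖ ≤ vmax * (tr - s)} Lr)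
    (hLs : IsGreatest {s : ℝ | s ≤ ts ∧ ‖πj ts - πi s‖ ≤ vmax * (ts - s)} Ls) :
    Lr < Ls := by
  obtain ⟨⟨hLr1, hLr2⟩, _⟩ := hLr
  have hvi0 : 0 ≤ vi := by
    have := hπi 1 0
    have h0 : (0:ℝ) ≤ ‖πi 1 - πi 0‖ := norm_nonneg _
    simp at this; linarith
  have hvmax : 0 < vmax := lt_of_le_of_lt hvi0 hvi
  -- key strict inequality at Lr
  have hkey : ‖πj ts - πi Lr‖ < vmax * (ts - Lr) := by
    have h1 : ‖πj ts - πi Lr‖ ≤ ‖πj ts - πj tr‖ + ‖πj tr - πi Lr‖ := by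
      have := norm_sub_le_norm_sub_add_norm_sub (πj ts) (πj tr) (πi Lr)
      linarith [this]
    have h2 : ‖πj ts - πj tr‖ ≤ vj * (ts - tr) := by
      have := hπj ts tr
      rwa [abs_of_pos (by linarith : (0:ℝ) < ts - tr)] at this
    have h3 : vj * (ts - tr) < vmax * (ts - tr) :=
      mul_lt_mul_of_pos_right hvj (by linarith)
    nlinarith
  set gap := vmax * (ts - Lr) - ‖πj ts - πi Lr‖ with hgap
  have hgap0 : 0 < gap := by linarith
  set ε := min (gap / (vi + vmax)) (ts - Lr) with hε
  have hε0 : 0 < ε := by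
    apply lt_min
    · exact div_pos hgap0 (by linarith)
    · linarith
  have hε1 : ε * (vi + vmax) ≤ gap := by
    have : ε ≤ gap / (vi + vmax) := min_le_left _ _
    rw [le_div_iff₀ (by linarith : (0:ℝ) < vi + vmax)] at this
    exact this
  have hε2 : ε ≤ ts - Lr := min_le_right _ _
  have hmem : Lr + ε ∈ {s : ℝ | s ≤ ts ∧ ‖πj ts - πi s‖ ≤ vmax * (ts - s)} := by
    constructor
    · linarith
    · have h1 : ‖πj ts - πi (Lr + ε)‖ ≤ ‖πj ts - πi Lr‖ + ‖πi Lr - πi (Lr + ε)‖ := by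
        have := norm_sub_le_norm_sub_add_norm_sub (πj ts) (πi Lr) (πi (Lr + ε))
        linarith [this]
      have h2 : ‖πi Lr - πi (Lr + ε)‖ ≤ vi * ε := by
        have := hπi Lr (Lr + ε)
        have habs : |Lr - (Lr + ε)| = ε := by
          rw [abs_sub_comm]; simp [abs_of_pos hε0]
        rwa [habs] at this
      nlinarith
  have := hLs.2 hmem
  linarith
end

section
/- Backward feasibility propagation: if an agent with maximum speed v_max can feasibly travel from π_i(t_p) to π_j(t_r), where π_i is Lipschitz with constant v_i < v_max, then for every time t with 0 ≤ t < t_p the agent can feasibly travel directly from π_i(t) to π_j(t_r), i.e. ‖π_j(t_r) − π_i(t)‖ ≤ v_max·(t_r − t). Moreover, if t_r > t_p and the original travel required speed v with v_i < v ≤ v_max (i.e. ‖π_j(t_r) − π_i(t_p)‖ = v·(t_r − t_p)), then the direct travel from π_i(t) requires speed strictly less than v. -/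
open Set

theorem stmt9
    (πi πj : ℝ → EuclideanSpace ℝ (Fin 2)) (vi vmax : ℝ) (hvi : vi < vmax)
    (hπi : ∀ s t : ℝ, ‖πi s - πi t‖ ≤ vi * |s - t|)
    (tp tr : ℝ)
    (hfeas : tp ≤ tr ∧ ‖πj tr - πi tp‖ ≤ vmax * (tr - tp)) :
    (∀ t : ℝ, 0 ≤ t → t < tp → t ≤ tr ∧ ‖πj tr - πi t‖ ≤ vmax * (tr - t)) ∧
    (∀ v : ℝ, tp < tr → vi < v → v ≤ vmax → ‖πj tr - πi tp‖ = v * (tr - tp) →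
      ∀ t : ℝ, 0 ≤ t → t < tp → ‖πj tr - πi t‖ / (tr - t) < v) := by
  obtain ⟨htr, hd⟩ := hfeas
  have hvi0 : 0 ≤ vi := by
    have := hπi (tp + 1) tp
    have h0 : (0:ℝ) ≤ ‖πi (tp+1) - πi tp‖ := norm_nonneg _
    have : (0:ℝ) ≤ vi * |tp + 1 - tp| := le_trans h0 this
    simpa using this
  have key : ∀ t : ℝ, t < tp → ‖πj tr - πi t‖ ≤ ‖πj tr - πi tp‖ + vi * (tp - t) := by
    intro t ht
    have h1 : ‖πj tr - πi t‖ ≤ ‖πj tr - πi tp‖ + ‖πi tp - πi t‖ := by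
      have := norm_sub_le_norm_sub_add_norm_sub (πj tr) (πi tp) (πi t)
      linarith
    have h2 : ‖πi tp - πi t‖ ≤ vi * (tp - t) := by
      have := hπi tp t
      rwa [abs_of_pos (by linarith)] at this
    linarith
  constructor
  · intro t ht0 ht
    refine ⟨by linarith, ?_⟩
    have := key t ht
    have hvm : vi * (tp - t) ≤ vmax * (tp - t) :=
      mul_le_mul_of_nonneg_right hvi.le (by linarith)
    nlinarith
  · intro v hlt hviv hvmax heq t ht0 ht
    have h := key t ht
    rw [heq] at h
    have htrt : 0 < tr - t := by linarith
    rw [div_lt_iff₀ htrt]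
    have : vi * (tp - t) < v * (tp - t) :=
      mul_lt_mul_of_pos_right hviv (by linarith)
    nlinarith
end

section
/- Forward feasibility propagation with speed decrease: if the agent can feasibly travel from π_i(t_p) to π_j(t_r) at speed v ≤ v_max, where π_j is Lipschitz with constant v_j < v_max, then for any t > t_r the agent can feasibly travel directly from π_i(t_p) to π_j(t); moreover, if t_r > t_p and v > v_j, the speed required for the direct travel to π_j(t) is strictly less than v. -/
open Set

theorem stmt10
    (πi πj : ℝ → EuclideanSpace ℝ (Fin 2)) (vj vmax v : ℝ)
    (hvj : vj < vmax) (hv : v ≤ vmax)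
    (hπj : ∀ s t : ℝ, ‖πj s - πj t‖ ≤ vj * |s - t|)
    (tp tr : ℝ) (hle : tp ≤ tr)
    (hspeed : ‖πj tr - πi tp‖ = v * (tr - tp)) :
    (∀ t : ℝ, tr < t → tp ≤ t ∧ ‖πj t - πi tp‖ ≤ vmax * (t - tp)) ∧
    (tp < tr → vj < v →
      ∀ t : ℝ, tr < t → ‖πj t - πi tp‖ / (t - tp) < v) := by
  have hvj0 : 0 ≤ vj := by
    have h := hπj 1 0
    have := norm_nonneg (πj 1 - πj 0)
    simp at h
    nlinarith [norm_nonneg (πj 1 - πj 0)]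
  have key : ∀ t : ℝ, tr < t →
      ‖πj t - πi tp‖ ≤ vj * (t - tr) + v * (tr - tp) := by
    intro t ht
    calc ‖πj t - πi tp‖ ≤ ‖πj t - πj tr‖ + ‖πj tr - πi tp‖ := by
          have := norm_sub_le_norm_sub_add_norm_sub (πj t) (πj tr) (πi tp)
          linarith [norm_add_le (πj t - πj tr) (πj tr - πi tp),
            norm_sub_le (πj t - πj tr) (πi tp - πj tr)]
      _ ≤ vj * (t - tr) + v * (tr - tp) := by
          have h1 := hπj t tr
          rw [abs_of_nonneg (by linarith : (0:ℝ) ≤ t - tr)] at h1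
          linarith [hspeed ▸ le_refl (‖πj tr - πi tp‖)]
  constructor
  · intro t ht
    refine ⟨by linarith, ?_⟩
    have := key t ht
    nlinarith
  · intro h1 h2 t ht
    have hk := key t ht
    have hpos : 0 < t - tp := by linarith
    rw [div_lt_iff₀ hpos]
    nlinarith
end

section
/- GTSP relaxation yields a lower bound for the MT-TSP: let each target i have its time-windows partitioned into trajectory-intervals (nodes), grouped into clusters C_i, and let the directed graph G on the depot and all nodes have edge costs ℓ_{pq} satisfying ℓ_{pq} ≤ (SFT cost from node p to node q) for every edge. Then for any feasible MT-TSP tour visiting targets in order i₁, …, i_n at times t₁ ≤ … ≤ t_n with total tour duration t_tour, the sequence of visited nodes is a feasible GTSP tour in G whose total edge cost is at most t_tour; hence the optimal GTSP cost is a lower bound on the optimal MT-TSP tour duration. -/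
/-! Each leg of a feasible tour is itself a candidate in the infimum defining the SFT cost of
the corresponding edge, so every edge cost is at most that leg's duration, and the leg durations
telescope to the tour time. -/

open Set

lemma le_of_le_csInf_of_nonneg {ℓ c : ℝ} {S : Set ℝ} (hS : ∀ x ∈ S, 0 ≤ x)
    (hℓ : ℓ ≤ sInf S) (hc : c ∈ S) : ℓ ≤ c :=
  hℓ.trans (csInf_le ⟨0, hS⟩ hc)

lemma tour_cost_le_of_le_legs {n : ℕ} (hn : 1 ≤ n) {t ℓ : ℕ → ℝ} {ℓ0 ℓn ttour : ℝ}
    (h0 : ℓ0 ≤ t 1) (hk : ∀ k ∈ Finset.Ico 1 n, ℓ k ≤ t (k + 1) - t k)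
    (hend : ℓn ≤ ttour - t n) :
    ℓ0 + (∑ k ∈ Finset.Ico 1 n, ℓ k) + ℓn ≤ ttour := by
  have hsum : ∑ k ∈ Finset.Ico 1 n, ℓ k ≤ t n - t 1 :=
    (Finset.sum_le_sum hk).trans_eq (Finset.sum_Ico_sub t hn)
  linarith

theorem stmt11_general
    (n : ℕ) (hn : 1 ≤ n)
    (π : ℕ → ℝ → EuclideanSpace ℝ (Fin 2))
    (d : EuclideanSpace ℝ (Fin 2)) (vmax : ℝ)
    (a b : ℕ → ℝ) (t : ℕ → ℝ) (ttour : ℝ)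
    (ht : ∀ k, 1 ≤ k → k ≤ n → t k ∈ Set.Icc (a k) (b k))
    (hfeas0 : 0 ≤ t 1 ∧ ‖π 1 (t 1) - d‖ ≤ vmax * (t 1 - 0))
    (hfeas : ∀ k, 1 ≤ k → k < n →
      t k ≤ t (k + 1) ∧
        ‖π (k + 1) (t (k + 1)) - π k (t k)‖ ≤ vmax * (t (k + 1) - t k))
    (hfeasn : t n ≤ ttour ∧ ‖d - π n (t n)‖ ≤ vmax * (ttour - t n))
    (ℓ0 ℓn : ℝ) (ℓ : ℕ → ℝ)
    (hℓ0 : ℓ0 ≤ sInf {c : ℝ | ∃ t' ∈ Set.Icc (a 1) (b 1),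
        (0 ≤ t' ∧ ‖π 1 t' - d‖ ≤ vmax * (t' - 0)) ∧ c = t' - 0})
    (hℓ : ∀ k, 1 ≤ k → k < n →
      ℓ k ≤ sInf {c : ℝ | ∃ s ∈ Set.Icc (a k) (b k),
        ∃ s' ∈ Set.Icc (a (k + 1)) (b (k + 1)),
        (s ≤ s' ∧ ‖π (k + 1) s' - π k s‖ ≤ vmax * (s' - s)) ∧ c = s' - s})
    (hℓn : ℓn ≤ sInf {c : ℝ | ∃ s ∈ Set.Icc (a n) (b n), ∃ s' : ℝ,
        (s ≤ s' ∧ ‖d - π n s‖ ≤ vmax * (s' - s)) ∧ c = s' - s}) :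
    ℓ0 + (∑ k ∈ Finset.Ico 1 n, ℓ k) + ℓn ≤ ttour := by
  have h0 : ℓ0 ≤ t 1 - 0 :=
    le_of_le_csInf_of_nonneg (by rintro _ ⟨_, _, ⟨h, _⟩, rfl⟩; linarith) hℓ0
      ⟨t 1, ht 1 le_rfl hn, hfeas0, rfl⟩
  have hk : ∀ k ∈ Finset.Ico 1 n, ℓ k ≤ t (k + 1) - t k := by
    intro k hk
    obtain ⟨hk1, hkn⟩ := Finset.mem_Ico.mp hk
    exact le_of_le_csInf_of_nonneg (by rintro _ ⟨_, _, _, _, ⟨h, _⟩, rfl⟩; linarith)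
      (hℓ k hk1 hkn)
      ⟨t k, ht k hk1 hkn.le, t (k + 1), ht (k + 1) (by omega) hkn, hfeas k hk1 hkn, rfl⟩
  have hend : ℓn ≤ ttour - t n :=
    le_of_le_csInf_of_nonneg (by rintro _ ⟨_, _, _, ⟨h, _⟩, rfl⟩; linarith) hℓn
      ⟨t n, ht n hn le_rfl, ttour, hfeasn, rfl⟩
  exact tour_cost_le_of_le_legs hn (h0.trans_eq (sub_zero _)) hk hend

theorem stmt11
    (n : ℕ) (hn : 1 ≤ n)
    (π : ℕ → ℝ → EuclideanSpace ℝ (Fin 2))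
    (d : EuclideanSpace ℝ (Fin 2)) (vmax : ℝ) (hvmax : 0 < vmax)
    (a b : ℕ → ℝ) (t : ℕ → ℝ) (ttour : ℝ)
    (ht : ∀ k, 1 ≤ k → k ≤ n → t k ∈ Set.Icc (a k) (b k))
    (hfeas0 : 0 ≤ t 1 ∧ ‖π 1 (t 1) - d‖ ≤ vmax * (t 1 - 0))
    (hfeas : ∀ k, 1 ≤ k → k < n →
      t k ≤ t (k + 1) ∧
        ‖π (k + 1) (t (k + 1)) - π k (t k)‖ ≤ vmax * (t (k + 1) - t k))
    (hfeasn : t n ≤ ttour ∧ ‖d - π n (t n)‖ ≤ vmax * (ttour - t n))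
    (ℓ0 ℓn : ℝ) (ℓ : ℕ → ℝ)
    (hℓ0 : ℓ0 ≤ sInf {c : ℝ | ∃ t' ∈ Set.Icc (a 1) (b 1),
        (0 ≤ t' ∧ ‖π 1 t' - d‖ ≤ vmax * (t' - 0)) ∧ c = t' - 0})
    (hℓ : ∀ k, 1 ≤ k → k < n →
      ℓ k ≤ sInf {c : ℝ | ∃ s ∈ Set.Icc (a k) (b k),
        ∃ s' ∈ Set.Icc (a (k + 1)) (b (k + 1)),
        (s ≤ s' ∧ ‖π (k + 1) s' - π k s‖ ≤ vmax * (s' - s)) ∧ c = s' - s})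
    (hℓn : ℓn ≤ sInf {c : ℝ | ∃ s ∈ Set.Icc (a n) (b n), ∃ s' : ℝ,
        (s ≤ s' ∧ ‖d - π n s‖ ≤ vmax * (s' - s)) ∧ c = s' - s}) :
    ℓ0 + (∑ k ∈ Finset.Ico 1 n, ℓ k) + ℓn ≤ ttour :=
  stmt11_general n hn π d vmax a b t ttour ht hfeas0 hfeas hfeasn ℓ0 ℓn ℓ hℓ0 hℓ hℓn
end

section
/- Optimal SFT solutions arrive at the earliest feasible arrival time: if (t*, t'*) minimizes t' − t over all feasible travels from π_i[ℓ_i, u_i] to π_j[ℓ_j, u_j], and 𝓔(t*) ∈ [ℓ_j, u_j], then t'* = 𝓔(t*); in particular the optimal SFT cost equals min over t ∈ [ℓ_i, u_i] with 𝓔(t) ∈ [ℓ_j, u_j] of (𝓔(t) − t). -/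
open Set

theorem stmt13
    (πi πj : ℝ → EuclideanSpace ℝ (Fin 2)) (vj vmax : ℝ) (hvj : vj < vmax)
    (hπj : ∀ s t : ℝ, ‖πj s - πj t‖ ≤ vj * |s - t|)
    (ℓi ui ℓj uj : ℝ)
    (E : ℝ → ℝ)
    (hE : ∀ t : ℝ,
      IsLeast {t' : ℝ | t ≤ t' ∧ ‖πj t' - πi t‖ ≤ vmax * (t' - t)} (E t))
    (ts ts' : ℝ)
    (hmem : ts ∈ Set.Icc ℓi ui ∧ ts' ∈ Set.Icc ℓj uj ∧
      ts ≤ ts' ∧ ‖πj ts' - πi ts‖ ≤ vmax * (ts' - ts))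
    (hopt : ∀ t ∈ Set.Icc ℓi ui, ∀ t' ∈ Set.Icc ℓj uj,
      t ≤ t' → ‖πj t' - πi t‖ ≤ vmax * (t' - t) → ts' - ts ≤ t' - t)
    (hEwin : E ts ∈ Set.Icc ℓj uj) :
    ts' = E ts ∧
    IsLeast {c : ℝ | ∃ t ∈ Set.Icc ℓi ui, E t ∈ Set.Icc ℓj uj ∧ c = E t - t}
      (ts' - ts) := by
  obtain ⟨hts, hts', hle, hfeas⟩ := hmem
  have h1 : E ts ≤ ts' := (hE ts).2 ⟨hle, hfeas⟩
  have h2 : ts' - ts ≤ E ts - ts :=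
    hopt ts hts (E ts) hEwin (hE ts).1.1 (hE ts).1.2
  have heq : ts' = E ts := le_antisymm (by linarith) h1
  refine ⟨heq, ⟨⟨ts, hts, hEwin, by linarith⟩, ?_⟩⟩
  rintro c ⟨t, ht, hEt, rfl⟩
  exact hopt t ht (E t) hEt (hE t).1.1 (hE t).1.2
end

section
/- Feasibility from the depot: travel from a stationary depot d (departure time 0) to the trajectory-interval π_s[t_p, t_q] is feasible if and only if travel from d to the single point π_s(t_q) is feasible, i.e. ‖π_s(t_q) − d‖ ≤ v_max·t_q. Furthermore, if travel from d to π_s(t_q) is feasible but travel from d to π_s(t_p) is not, then the SFT from d to π_s[t_p, t_q] has cost 𝓔(0), the earliest feasible arrival time on π_s starting from d at time 0, and t_p < 𝓔(0) ≤ t_q. -/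
open Set

theorem stmt16
    (πs : ℝ → EuclideanSpace ℝ (Fin 2)) (d : EuclideanSpace ℝ (Fin 2))
    (vs vmax : ℝ) (hvs0 : 0 ≤ vs) (hvs : vs < vmax)
    (hπs : ∀ s t : ℝ, ‖πs s - πs t‖ ≤ vs * |s - t|)
    (tp tq : ℝ) (h0p : 0 ≤ tp) (hpq : tp ≤ tq) :
    ((∃ t ∈ Set.Icc tp tq, ‖πs t - d‖ ≤ vmax * t) ↔ ‖πs tq - d‖ ≤ vmax * tq) ∧
    (‖πs tq - d‖ ≤ vmax * tq → ¬ ‖πs tp - d‖ ≤ vmax * tp →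
      ∀ E : ℝ, IsLeast {t : ℝ | 0 ≤ t ∧ ‖πs t - d‖ ≤ vmax * t} E →
        tp < E ∧ E ≤ tq ∧
        IsLeast {c : ℝ | ∃ t ∈ Set.Icc tp tq, ‖πs t - d‖ ≤ vmax * t ∧ c = t} E) := by
  have mono : ∀ s t : ℝ, s ≤ t → ‖πs s - d‖ ≤ vmax * s → ‖πs t - d‖ ≤ vmax * t := by
    intro s t hst hf
    have h1 : ‖πs t - d‖ ≤ ‖πs t - πs s‖ + ‖πs s - d‖ := norm_sub_le_norm_sub_add_norm_sub _ _ _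
    have h2 : ‖πs t - πs s‖ ≤ vs * (t - s) := by
      have := hπs t s
      rwa [abs_of_nonneg (by linarith)] at this
    have h3 : vs * (t - s) ≤ vmax * (t - s) := by nlinarith
    nlinarith
  constructor
  · constructor
    · rintro ⟨t, ⟨htp, htq⟩, hf⟩
      exact mono t tq htq hf
    · intro h
      exact ⟨tq, ⟨hpq, le_refl _⟩, h⟩
  · intro hq hp E hE
    obtain ⟨⟨hE0, hEf⟩, hElb⟩ := hE
    have hEp : tp < E := by
      by_contra h
      push_neg at h
      exact hp (mono E tp h hEf)
    have hEq : E ≤ tq := hElb ⟨by linarith, hq⟩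
    refine ⟨hEp, hEq, ⟨⟨E, ⟨le_of_lt hEp, hEq⟩, hEf, rfl⟩, ?_⟩⟩
    rintro c ⟨t, ⟨htp, htq⟩, hf, rfl⟩
    exact hElb ⟨by linarith, hf⟩
end

section
/- No-intersection implies positive SFT cost: if for all t ∈ [ℓ_i, u_i] ∩ [ℓ_j, u_j] we have π_i(t) ≠ π_j(t), and the intervals' trajectory sets are compact, then either the SFT from π_i[ℓ_i, u_i] to π_j[ℓ_j, u_j] is infeasible, or its optimal cost is strictly positive; conversely, if there exists t ∈ [ℓ_i, u_i] ∩ [ℓ_j, u_j] with π_i(t) = π_j(t), the optimal SFT cost is 0. -/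
open Set

theorem stmt18
    (πi πj : ℝ → EuclideanSpace ℝ (Fin 2)) (vmax : ℝ) (hv : 0 < vmax)
    (hci : Continuous πi) (hcj : Continuous πj)
    (ℓi ui ℓj uj : ℝ) (hi : ℓi ≤ ui) (hj : ℓj ≤ uj) :
    ((∀ t ∈ Set.Icc ℓi ui ∩ Set.Icc ℓj uj, πi t ≠ πj t) →
      ({c : ℝ | ∃ t ∈ Set.Icc ℓi ui, ∃ t' ∈ Set.Icc ℓj uj,
          (t ≤ t' ∧ ‖πj t' - πi t‖ ≤ vmax * (t' - t)) ∧ c = t' - t} = ∅ ∨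
        0 < sInf {c : ℝ | ∃ t ∈ Set.Icc ℓi ui, ∃ t' ∈ Set.Icc ℓj uj,
          (t ≤ t' ∧ ‖πj t' - πi t‖ ≤ vmax * (t' - t)) ∧ c = t' - t})) ∧
    ((∃ t ∈ Set.Icc ℓi ui ∩ Set.Icc ℓj uj, πi t = πj t) →
      IsLeast {c : ℝ | ∃ t ∈ Set.Icc ℓi ui, ∃ t' ∈ Set.Icc ℓj uj,
          (t ≤ t' ∧ ‖πj t' - πi t‖ ≤ vmax * (t' - t)) ∧ c = t' - t} 0) := by
  set S := {c : ℝ | ∃ t ∈ Set.Icc ℓi ui, ∃ t' ∈ Set.Icc ℓj uj,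
      (t ≤ t' ∧ ‖πj t' - πi t‖ ≤ vmax * (t' - t)) ∧ c = t' - t} with hS
  set K := {p : ℝ × ℝ | p.1 ∈ Set.Icc ℓi ui ∧ p.2 ∈ Set.Icc ℓj uj ∧ p.1 ≤ p.2 ∧
      ‖πj p.2 - πi p.1‖ ≤ vmax * (p.2 - p.1)} with hKdef
  have hSK : S = (fun p : ℝ × ℝ => p.2 - p.1) '' K := by
    ext c
    constructor
    · rintro ⟨t, ht, t', ht', ⟨hle, hn⟩, rfl⟩
      exact ⟨(t, t'), ⟨ht, ht', hle, hn⟩, rfl⟩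
    · rintro ⟨⟨t, t'⟩, ⟨ht, ht', hle, hn⟩, rfl⟩
      exact ⟨t, ht, t', ht', ⟨hle, hn⟩, rfl⟩
  have hKcl : IsClosed K := by
    apply IsClosed.inter (isClosed_Icc.preimage continuous_fst)
    apply IsClosed.inter (isClosed_Icc.preimage continuous_snd)
    apply IsClosed.inter (isClosed_le continuous_fst continuous_snd)
    exact isClosed_le ((hcj.comp continuous_snd).sub (hci.comp continuous_fst)).norm
      (continuous_const.mul (continuous_snd.sub continuous_fst))
  have hKc : IsCompact K := (isCompact_Icc.prod isCompact_Icc).of_isClosed_subset hKcl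
    (fun p hp => ⟨hp.1, hp.2.1⟩)
  have hSc : IsCompact S := hSK ▸ hKc.image (continuous_snd.sub continuous_fst)
  have hlb : ∀ c ∈ S, (0:ℝ) ≤ c := by
    rintro c ⟨t, ht, t', ht', ⟨hle, hn⟩, rfl⟩
    linarith
  constructor
  · intro hne
    rcases eq_empty_or_nonempty S with h | h
    · exact Or.inl h
    · right
      have hmem := hSc.sInf_mem h
      rcases hmem with ⟨t, ht, t', ht', ⟨hle, hn⟩, heq⟩
      rcases lt_or_eq_of_le (hlb _ (hSc.sInf_mem h)) with hpos | h0
      · exact hpos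
      · exfalso
        have htt : t = t' := by linarith [heq, h0]
        subst htt
        have : ‖πj t - πi t‖ ≤ 0 := by simpa using hn
        have heqp : πi t = πj t := by
          have := norm_sub_eq_zero_iff.mp (le_antisymm this (norm_nonneg _))
          exact this.symm
        exact hne t ⟨ht, ht'⟩ heqp
  · rintro ⟨t, ⟨ht1, ht2⟩, heq⟩
    constructor
    · exact ⟨t, ht1, t, ht2, ⟨le_refl t, by simp [heq]⟩, by ring⟩
    · exact hlb
end
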